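/- There exists an absolute constant C > 0 such that for every n ≥ 1, every polynomial p : 𝔽₂ⁿ → 𝔽₂ of degree at most 2, and every k ≥ 1, the k-th Fourier weight of f(x) = (−1)^{p(x)} satisfies ∑_{A ⊆ [n], |A| = k} |f̂(A)| ≤ C · k^{−1/2} · (1 + √2)^k. -/

import Mathlib

/-- The Fourier coefficient `f̂(A) = 2^{-n} ∑_{x ∈ 𝔽₂ⁿ} f(x) (-1)^{x_A}`,
where `x_A = ∑_{i ∈ A} x_i ∈ 𝔽₂`. -/
noncomputable def fCoeff {n : ℕ} (f : (Fin n → ZMod 2) → ℝ) (A : Finset (Fin n)) : ℝ :=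
  (1 / 2 ^ n) * ∑ x : Fin n → ZMod 2, f x * (-1 : ℝ) ^ (∑ i ∈ A, x i).val

/-- `p : 𝔽₂ⁿ → 𝔽₂` is a polynomial of degree at most 2. -/
def IsDegreeLE2 {n : ℕ} (p : (Fin n → ZMod 2) → ZMod 2) : Prop :=
  ∃ (a : Fin n → Fin n → ZMod 2) (b : Fin n → ZMod 2) (c : ZMod 2),
    ∀ x, p x = (∑ i : Fin n, ∑ j : Fin n, if i < j then a i j * x i * x j else 0)
      + (∑ i : Fin n, b i * x i) + c

/-!
Write `f = (-1)^p` and let `B` be the polarisation of `p`, so that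
`p (x + h) - p x - p h + p 0 = B h x`, with radical `K = ker B`. Expanding `f̂(A)²` and
substituting `y = x + h` collapses the double sum onto `K`:
`f̂(A)² = 2⁻ⁿ ∑_{h ∈ K} (-1)^(p h - p 0 + h_A)`, and on `K` the exponent is additive, so the sum is
`|K|` or `0`. Hence `|f̂(A)| ≤ 2^(-d/2)` with `d = n - dim K`, and `f̂(A) ≠ 0` forces
`h_A = p 0 - p h` on `K`: the support lies in one coset of the annihilator of `K`, a space of
dimension `d`. Some `d` coordinates `P` determine its elements, so `A ↦ A ∩ P` is injective on the
support and at most `∑_{j ≤ k} C(d, j)` sets of size `k` carry weight.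

It remains to bound `∑_{j ≤ k} C(d, j) / √2^d` by `C k^(-1/2) (1 + √2)^k` uniformly in `d`. For
`2d ≤ 5k` the crude bound `2^d` suffices, because `2^(5/4) < 1 + √2`. For `2d > 5k` the partial sum
is at most three times its last term, and `C(d, k) / (√2^d (1 + √2)^k)` is the binomial probability
`C(d, k) p^k (1 - p)^(d - k)` with `p = 1 - 1/√2`, which is `O(k^(-1/2))` by Stirling's formula.
-/

open Finset Module

noncomputable def signChar : AddChar (ZMod 2) ℝ :=
  AddChar.zmodChar 2 (by norm_num : (-1 : ℝ) ^ 2 = 1)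

lemma signChar_apply (z : ZMod 2) : signChar z = (-1) ^ z.val := rfl

lemma signChar_one : signChar 1 = -1 := by
  rw [signChar_apply, ZMod.val_one, pow_one]

lemma signChar_eq_one_iff (z : ZMod 2) : signChar z = 1 ↔ z = 0 := by
  obtain rfl | rfl : z = 0 ∨ z = 1 := by revert z; decide
  · simp
  · norm_num [signChar_one]

lemma sum_signChar_addMonoidHom {G : Type*} [AddCommGroup G] [Fintype G] (φ : G →+ ZMod 2)
    [Decidable (φ = 0)] :
    ∑ g, signChar (φ g) = if φ = 0 then (Fintype.card G : ℝ) else 0 := by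
  have hiff : signChar.compAddMonoidHom φ = 0 ↔ φ = 0 := by
    rw [AddChar.eq_zero_iff, DFunLike.ext_iff]
    simp only [AddChar.compAddMonoidHom_apply, signChar_eq_one_iff, AddMonoidHom.zero_apply]
  simpa only [AddChar.compAddMonoidHom_apply, hiff] using
    AddChar.sum_eq_ite (signChar.compAddMonoidHom φ)

lemma IsDegreeLE2.exists_bilinForm {n : ℕ} {p : (Fin n → ZMod 2) → ZMod 2} (hp : IsDegreeLE2 p) :
    ∃ B : LinearMap.BilinForm (ZMod 2) (Fin n → ZMod 2),
      ∀ x h, p (x + h) - p x - p h + p 0 = B h x := by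
  obtain ⟨a, b, c, hp⟩ := hp
  set Q : (Fin n → ZMod 2) → ZMod 2 := fun y => ∑ i, ∑ j, if i < j then a i j * y i * y j else 0
  set L : (Fin n → ZMod 2) → ZMod 2 := fun y => ∑ i, b i * y i
  have hp' : ∀ y, p y = Q y + L y + c := hp
  let A : Matrix (Fin n) (Fin n) (ZMod 2) := Matrix.of fun i j => if i < j then a i j else 0
  refine ⟨Matrix.toBilin' A + LinearMap.flip (Matrix.toBilin' A), fun x h => ?_⟩
  have hQ : Q (x + h) - Q x - Q h = ∑ i, ∑ j, (h i * A i j * x j + x i * A i j * h j) := by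
    simp only [Q, ← sum_sub_distrib]
    refine sum_congr rfl fun i _ => sum_congr rfl fun j _ => ?_
    simp only [A, Matrix.of_apply, Pi.add_apply]
    split_ifs <;> ring
  have hL : L (x + h) = L x + L h := by simp only [L, Pi.add_apply, mul_add, sum_add_distrib]
  have hQ0 : Q 0 = 0 := by simp [Q]
  have hL0 : L 0 = 0 := by simp [L]
  rw [hp', hp', hp', hp']
  simp only [LinearMap.add_apply, LinearMap.flip_apply, Matrix.toBilin'_apply]
  simp only [sum_add_distrib] at hQ
  linear_combination hQ + hL + hQ0 + hL0

section Fourier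

variable {n : ℕ} {p : (Fin n → ZMod 2) → ZMod 2} {B : LinearMap.BilinForm (ZMod 2) (Fin n → ZMod 2)}

lemma fCoeff_neg_one_pow_eq (A : Finset (Fin n)) :
    fCoeff (fun x => (-1 : ℝ) ^ (p x).val) A = 1 / 2 ^ n * ∑ x, signChar (p x + ∑ i ∈ A, x i) := by
  simp only [fCoeff, AddChar.map_add_eq_mul, signChar_apply]

lemma sum_signChar_linearMap (f : (Fin n → ZMod 2) →ₗ[ZMod 2] ZMod 2) [Decidable (f = 0)] :
    ∑ x, signChar (f x) = if f = 0 then 2 ^ n else 0 := by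
  classical
  have hf : f.toAddMonoidHom = 0 ↔ f = 0 := by
    rw [← LinearMap.toAddMonoidHom_injective.eq_iff]; rfl
  simpa [hf] using sum_signChar_addMonoidHom f.toAddMonoidHom

open scoped Classical in
lemma sq_sum_signChar (hB : ∀ x h, p (x + h) - p x - p h + p 0 = B h x) (A : Finset (Fin n)) :
    (∑ x, signChar (p x + ∑ i ∈ A, x i)) ^ 2
      = 2 ^ n * ∑ h : LinearMap.ker B, signChar (p h - p 0 + ∑ i ∈ A, (h : Fin n → ZMod 2) i) := by
  set g : (Fin n → ZMod 2) → ZMod 2 := fun x => p x + ∑ i ∈ A, x i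
  set φ : (Fin n → ZMod 2) → ZMod 2 := fun h => p h - p 0 + ∑ i ∈ A, h i
  have hg : ∀ x h, g x + g (x + h) = B h x + φ h := by
    intro x h
    simp only [g, φ, Pi.add_apply, sum_add_distrib]
    linear_combination hB x h + (p x + ∑ i ∈ A, x i) * CharTwo.two_eq_zero (R := ZMod 2)
  calc (∑ x, signChar (g x)) ^ 2
      = ∑ x, ∑ h, signChar (g x) * signChar (g (x + h)) := by
        rw [sq, sum_mul_sum]
        exact sum_congr rfl fun x _ => (Equiv.sum_comp (Equiv.addLeft x) _).symm
    _ = ∑ h, signChar (φ h) * ∑ x, signChar (B h x) := by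
        rw [sum_comm]
        refine sum_congr rfl fun h _ => ?_
        rw [mul_sum]
        refine sum_congr rfl fun x _ => ?_
        rw [← AddChar.map_add_eq_mul, hg, AddChar.map_add_eq_mul, mul_comm]
    _ = ∑ h ∈ univ.filter (fun h => B h = 0), 2 ^ n * signChar (φ h) := by
        rw [sum_filter]
        refine sum_congr rfl fun h _ => ?_
        rw [sum_signChar_linearMap]
        split_ifs <;> ring
    _ = 2 ^ n * ∑ h : LinearMap.ker B, signChar (φ h) := by
        rw [← mul_sum, sum_subtype _ (p := (· ∈ LinearMap.ker B)) (fun h => by simp)]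

open scoped Classical in
lemma fCoeff_sq_eq (hB : ∀ x h, p (x + h) - p x - p h + p 0 = B h x) (A : Finset (Fin n)) :
    fCoeff (fun x => (-1 : ℝ) ^ (p x).val) A ^ 2
      = if ∀ h ∈ LinearMap.ker B, p h - p 0 + ∑ i ∈ A, h i = 0
        then (Nat.card (LinearMap.ker B) : ℝ) / 2 ^ n else 0 := by
  let φ : LinearMap.ker B →+ ZMod 2 := AddMonoidHom.mk'
    (fun h => p h - p 0 + ∑ i ∈ A, (h : Fin n → ZMod 2) i) fun h h' => by
      have hB' := hB h h'
      rw [LinearMap.mem_ker.mp h'.2, LinearMap.zero_apply] at hB'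
      simp only [Submodule.coe_add, Pi.add_apply, sum_add_distrib]
      linear_combination hB'
  have hφ : φ = 0 ↔ ∀ h ∈ LinearMap.ker B, p h - p 0 + ∑ i ∈ A, h i = 0 := by
    simp [DFunLike.ext_iff, φ]
  have hsum : ∑ h : LinearMap.ker B, signChar (p h - p 0 + ∑ i ∈ A, (h : Fin n → ZMod 2) i)
      = if φ = 0 then (Fintype.card (LinearMap.ker B) : ℝ) else 0 :=
    sum_signChar_addMonoidHom φ
  rw [fCoeff_neg_one_pow_eq, mul_pow, sq_sum_signChar hB, hsum, Nat.card_eq_fintype_card]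
  by_cases hc : ∀ h ∈ LinearMap.ker B, p h - p 0 + ∑ i ∈ A, h i = 0
  · rw [if_pos (hφ.mpr hc), if_pos hc]
    field_simp
  · rw [if_neg (mt hφ.mp hc), if_neg hc]
    simp

lemma fCoeff_sq_le (hB : ∀ x h, p (x + h) - p x - p h + p 0 = B h x) (A : Finset (Fin n)) :
    fCoeff (fun x => (-1 : ℝ) ^ (p x).val) A ^ 2 ≤ (Nat.card (LinearMap.ker B) : ℝ) / 2 ^ n := by
  classical
  rw [fCoeff_sq_eq hB]
  split_ifs
  exacts [le_rfl, by positivity]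

lemma forall_mem_ker_eq_zero_of_fCoeff_ne_zero (hB : ∀ x h, p (x + h) - p x - p h + p 0 = B h x)
    {A : Finset (Fin n)} (hA : fCoeff (fun x => (-1 : ℝ) ^ (p x).val) A ≠ 0) :
    ∀ h ∈ LinearMap.ker B, p h - p 0 + ∑ i ∈ A, h i = 0 := by
  classical
  by_contra hc
  exact hA (pow_eq_zero_iff two_ne_zero |>.mp (by rw [fCoeff_sq_eq hB, if_neg hc]))

end Fourier

section LinearAlgebra

variable {F ι : Type*} [Field F] [Fintype ι]

lemma Submodule.exists_finset_card_le_finrank (W : Submodule F (ι → F)) :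
    ∃ P : Finset ι, P.card ≤ finrank F W ∧ ∀ w ∈ W, (∀ i ∈ P, w i = 0) → w = 0 := by
  classical
  induction hr : finrank F W using Nat.strong_induction_on generalizing W with
  | _ r ih =>
    obtain rfl | hW := eq_or_ne W ⊥
    · exact ⟨∅, by simp, fun w hw _ => (Submodule.mem_bot F).mp hw⟩
    obtain ⟨w₀, hw₀W, hw₀⟩ := Submodule.exists_mem_ne_zero_of_ne_bot hW
    obtain ⟨i₀, hi₀⟩ := Function.ne_iff.mp hw₀
    let W' := W ⊓ LinearMap.ker (LinearMap.proj i₀ : (ι → F) →ₗ[F] F)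
    have hW' : finrank F W' < r :=
      hr ▸ Submodule.finrank_lt_finrank_of_lt (inf_le_left.lt_of_ne fun h => hi₀ (h.ge hw₀W).2)
    obtain ⟨P', hP'card, hP'⟩ := ih _ hW' W' rfl
    refine ⟨insert i₀ P', (card_insert_le _ _).trans (by omega), fun w hwW hw => ?_⟩
    exact hP' w ⟨hwW, hw i₀ (mem_insert_self _ _)⟩ fun i hi => hw i (mem_insert_of_mem hi)

lemma Submodule.exists_finset_card_add_finrank_le (K : Submodule F (ι → F)) :
    ∃ P : Finset ι, P.card + finrank F K ≤ Fintype.card ι ∧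
      ∀ v, (∀ h ∈ K, h ⬝ᵥ v = 0) → (∀ i ∈ P, v i = 0) → v = 0 := by
  classical
  let D : LinearMap.BilinForm F (ι → F) := dotProductBilin F F
  have hnd : D.Nondegenerate :=
    ⟨fun v hv => funext fun i => by simpa [D] using hv (Pi.single i 1),
      fun v hv => funext fun i => by simpa [D] using hv (Pi.single i 1)⟩
  obtain ⟨P, hPcard, hP⟩ := (D.orthogonal K).exists_finset_card_le_finrank
  refine ⟨P, ?_, hP⟩
  have hW := LinearMap.BilinForm.finrank_orthogonal hnd K
  have hK := K.finrank_le
  simp only [Module.finrank_pi] at hW hK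
  omega

lemma Submodule.exists_finset_card_add_finrank_le_eq_of_inter_eq [DecidableEq ι]
    (K : Submodule F (ι → F)) :
    ∃ P : Finset ι, P.card + finrank F K ≤ Fintype.card ι ∧
      ∀ S T : Finset ι, (∀ h ∈ K, ∑ i ∈ S, h i = ∑ i ∈ T, h i) → S ∩ P = T ∩ P → S = T := by
  obtain ⟨P, hPcard, hP⟩ := K.exists_finset_card_add_finrank_le
  refine ⟨P, hPcard, fun S T hST hP' => ?_⟩
  let v : ι → F := fun i => (if i ∈ S then 1 else 0) - (if i ∈ T then 1 else 0)
  have hv : v = 0 := by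
    refine hP v (fun h hh => ?_) (fun i hi => ?_)
    · simp only [v, dotProduct, mul_sub, mul_ite, mul_one, mul_zero, sum_sub_distrib,
        sum_ite_mem, univ_inter, hST h hh, sub_self]
    · have : i ∈ S ↔ i ∈ T := by simpa [hi] using congrArg (i ∈ ·) hP'
      simp [v, this]
  ext i
  have hvi : (if i ∈ S then (1 : F) else 0) - (if i ∈ T then 1 else 0) = 0 := congrFun hv i
  by_cases hS : i ∈ S <;> by_cases hT : i ∈ T <;> simp [hS, hT] at hvi ⊢

end LinearAlgebra

lemma Finset.card_le_sum_choose_of_injOn_inter {ι : Type*} [DecidableEq ι] {𝒮 : Finset (Finset ι)}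
    {P : Finset ι} {k : ℕ} (hcard : ∀ S ∈ 𝒮, S.card ≤ k) (hinj : Set.InjOn (· ∩ P) 𝒮) :
    𝒮.card ≤ ∑ j ∈ range (k + 1), P.card.choose j := by
  calc 𝒮.card ≤ ((range (k + 1)).biUnion fun j => powersetCard j P).card :=
        card_le_card_of_injOn _ (fun S hS => mem_biUnion.mpr ⟨(S ∩ P).card,
          mem_range.mpr (Nat.lt_succ_of_le ((card_le_card inter_subset_left).trans (hcard S hS))),
          mem_powersetCard.mpr ⟨inter_subset_right, rfl⟩⟩) hinj
    _ ≤ ∑ j ∈ range (k + 1), (powersetCard j P).card := card_biUnion_le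
    _ = ∑ j ∈ range (k + 1), P.card.choose j := by simp only [card_powersetCard]

theorem exists_sum_abs_fCoeff_le {n : ℕ} {p : (Fin n → ZMod 2) → ZMod 2}
    {B : LinearMap.BilinForm (ZMod 2) (Fin n → ZMod 2)}
    (hB : ∀ x h, p (x + h) - p x - p h + p 0 = B h x) (k : ℕ) :
    ∃ d : ℕ, ∑ A ∈ powersetCard k univ, |fCoeff (fun x => (-1 : ℝ) ^ (p x).val) A|
      ≤ (∑ j ∈ range (k + 1), (d.choose j : ℝ)) / √2 ^ d := by
  classical
  set f : (Fin n → ZMod 2) → ℝ := fun x => (-1 : ℝ) ^ (p x).val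
  obtain ⟨P, hPcard, hP⟩ := (LinearMap.ker B).exists_finset_card_add_finrank_le_eq_of_inter_eq
  have hcoeff : ∀ A, |fCoeff f A| ≤ 1 / √2 ^ P.card := by
    intro A
    refine abs_le_of_sq_le_sq ((fCoeff_sq_le hB A).trans ?_) (by positivity)
    rw [Module.natCard_eq_pow_finrank (K := ZMod 2), Nat.card_zmod, div_pow, one_pow, ← pow_mul,
      mul_comm, pow_mul, Real.sq_sqrt zero_le_two, div_le_div_iff₀ (by positivity) (by positivity),
      one_mul, Nat.cast_pow, Nat.cast_ofNat, ← pow_add]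
    exact pow_le_pow_right₀ one_le_two (by simpa [add_comm] using hPcard)
  let 𝒮 := (powersetCard k univ).filter fun A => fCoeff f A ≠ 0
  have hinj : Set.InjOn (· ∩ P) 𝒮 := by
    intro S hS T hT hST
    rw [mem_coe, mem_filter] at hS hT
    refine hP S T (fun h hh => ?_) hST
    linear_combination forall_mem_ker_eq_zero_of_fCoeff_ne_zero hB hS.2 h hh
      - forall_mem_ker_eq_zero_of_fCoeff_ne_zero hB hT.2 h hh
  have hcount : (𝒮.card : ℝ) ≤ ∑ j ∈ range (k + 1), (P.card.choose j : ℝ) := by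
    exact_mod_cast card_le_sum_choose_of_injOn_inter
      (fun S hS => (mem_powersetCard.mp (mem_filter.mp hS).1).2.le) hinj
  refine ⟨P.card, ?_⟩
  calc ∑ A ∈ powersetCard k univ, |fCoeff f A| = ∑ A ∈ 𝒮, |fCoeff f A| :=
        (sum_filter_of_ne fun A _ hA => by simpa using hA).symm
    _ ≤ 𝒮.card • (1 / √2 ^ P.card) := sum_le_card_nsmul _ _ _ fun A _ => hcoeff A
    _ ≤ (∑ j ∈ range (k + 1), (P.card.choose j : ℝ)) / √2 ^ P.card := by
        rw [nsmul_eq_mul, mul_one_div]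
        gcongr

open Real
open scoped Nat

lemma factorial_le_exp_one_mul_sqrt {n : ℕ} (hn : n ≠ 0) :
    (n ! : ℝ) ≤ exp 1 * √n * (n / exp 1) ^ n := by
  obtain ⟨m, rfl⟩ := Nat.exists_eq_add_one_of_ne_zero hn
  have h : Stirling.stirlingSeq (m + 1) ≤ exp 1 / √2 :=
    Stirling.stirlingSeq_one ▸ Stirling.stirlingSeq'_antitone (Nat.zero_le m)
  rw [Stirling.stirlingSeq, div_le_div_iff₀ (by positivity) (by positivity),
    Real.sqrt_mul zero_le_two] at h
  have h2 : (0 : ℝ) < √2 := by positivity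
  nlinarith

lemma choose_le_sqrt_mul {k m : ℕ} (hk : k ≠ 0) (hm : m ≠ 0) :
    ((k + m).choose k : ℝ) ≤ √((k + m) / (k * m)) * (k + m) ^ (k + m) / (k ^ k * m ^ m) := by
  have hk' : (0 : ℝ) < k := by positivity
  have hm' : (0 : ℝ) < m := by positivity
  have hchoose : ((k + m).choose k : ℝ) = (k + m) ! / (k ! * m !) := by
    rw [eq_div_iff (by positivity), ← mul_assoc]
    have := Nat.choose_mul_factorial_mul_factorial (Nat.le_add_right k m)
    rw [Nat.add_sub_cancel_left] at this
    exact_mod_cast this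
  have hpi : exp 1 ≤ 2 * π := by linarith [Real.exp_one_lt_d9, Real.pi_gt_three]
  calc ((k + m).choose k : ℝ)
      ≤ exp 1 * √(k + m : ℕ) * ((k + m : ℕ) / exp 1) ^ (k + m)
          / (√(2 * π * k) * (k / exp 1) ^ k * (√(2 * π * m) * (m / exp 1) ^ m)) := by
        rw [hchoose]
        gcongr
        · exact factorial_le_exp_one_mul_sqrt (by omega)
        · exact Stirling.le_factorial_stirling k
        · exact Stirling.le_factorial_stirling m
    _ = exp 1 / (2 * π) * (√((k + m) / (k * m)) * (k + m) ^ (k + m) / (k ^ k * m ^ m)) := by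
        push_cast
        rw [Real.sqrt_mul' _ hk'.le, Real.sqrt_mul' _ hm'.le, Real.sqrt_div' _ (by positivity),
          Real.sqrt_mul hk'.le, div_pow, div_pow, div_pow]
        set a := √(2 * π)
        have ha : 2 * π = a ^ 2 := (Real.sq_sqrt (by positivity)).symm
        rw [ha]
        field_simp
        rw [pow_add]
    _ ≤ 1 * (√((k + m) / (k * m)) * (k + m) ^ (k + m) / (k ^ k * m ^ m)) := by
        gcongr
        exact (div_le_one (by positivity)).mpr hpi
    _ = _ := one_mul _

lemma pow_mul_pow_le_of_add_eq_one {p q : ℝ} (hp : 0 ≤ p) (hq : 0 ≤ q) (hpq : p + q = 1)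
    {k m : ℕ} (hk : k ≠ 0) (hm : m ≠ 0) :
    p ^ k * q ^ m ≤ (k / (k + m)) ^ k * (m / (k + m)) ^ m := by
  have hk' : (0 : ℝ) < k := by positivity
  have hm' : (0 : ℝ) < m := by positivity
  rcases hp.eq_or_lt with rfl | hp
  · simp [zero_pow hk]; positivity
  rcases hq.eq_or_lt with rfl | hq
  · simp [zero_pow hm]; positivity
  set a := p * (k + m) / k
  set b := q * (k + m) / m
  have ha : 0 < a := by positivity
  have hb : 0 < b := by positivity
  have hab : a ^ k * b ^ m ≤ 1 := by
    rw [← Real.log_nonpos_iff (by positivity), Real.log_mul (by positivity) (by positivity),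
      Real.log_pow, Real.log_pow]
    have h1 : (k : ℝ) * (a - 1) + m * (b - 1) = 0 := by
      simp only [a, b]; field_simp; linear_combination (k + m : ℝ) * hpq
    nlinarith [Real.log_le_sub_one_of_pos ha, Real.log_le_sub_one_of_pos hb]
  calc p ^ k * q ^ m = (a * (k / (k + m))) ^ k * (b * (m / (k + m))) ^ m := by
        congr 2 <;> (simp only [a, b]; field_simp)
    _ = (a ^ k * b ^ m) * ((k / (k + m)) ^ k * (m / (k + m)) ^ m) := by
        rw [mul_pow, mul_pow, mul_mul_mul_comm]
    _ ≤ _ := mul_le_of_le_one_left (by positivity) hab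

lemma choose_mul_pow_mul_pow_le {p q : ℝ} (hp : 0 ≤ p) (hq : 0 ≤ q) (hpq : p + q = 1)
    {k m : ℕ} (hk : k ≠ 0) (hm : m ≠ 0) :
    (k + m).choose k * p ^ k * q ^ m ≤ √((k + m) / (k * m)) := by
  have hk' : (0 : ℝ) < k := by positivity
  have hm' : (0 : ℝ) < m := by positivity
  calc (k + m).choose k * p ^ k * q ^ m = (k + m).choose k * (p ^ k * q ^ m) := mul_assoc ..
    _ ≤ √((k + m) / (k * m)) * (k + m) ^ (k + m) / (k ^ k * m ^ m)
          * ((k / (k + m)) ^ k * (m / (k + m)) ^ m) := by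
        exact mul_le_mul (choose_le_sqrt_mul hk hm) (pow_mul_pow_le_of_add_eq_one hp hq hpq hk hm)
          (by positivity) (by positivity)
    _ = √((k + m) / (k * m)) := by
        rw [div_pow, div_pow, pow_add]
        field_simp

lemma choose_mul_sqrt_le {d k : ℕ} (hk : k ≠ 0) (hkd : 2 * k ≤ d) :
    d.choose k * √k ≤ √2 * √2 ^ d * (1 + √2) ^ k := by
  obtain ⟨m, rfl⟩ : ∃ m, d = k + m := ⟨d - k, by omega⟩
  have hm : m ≠ 0 := by omega
  have hk' : (0 : ℝ) < k := by positivity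
  have hm' : (0 : ℝ) < m := by positivity
  have hkm : (k : ℝ) ≤ m := by exact_mod_cast (by omega : k ≤ m)
  have hs : √2 * √2 = 2 := Real.mul_self_sqrt zero_le_two
  have hs1 : 1 ≤ √2 := Real.one_le_sqrt.mpr one_le_two
  obtain ⟨q, hq⟩ : ∃ q : ℝ, q = 1 / √2 := ⟨_, rfl⟩
  have hq1 : q * √2 = 1 := by rw [hq]; field_simp
  have hp1 : (1 - q) * (1 + √2) * √2 = 1 := by linear_combination hs - (1 + √2) * hq1
  have hbinom := choose_mul_pow_mul_pow_le (p := 1 - q) (q := q) (by nlinarith) (by nlinarith)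
    (sub_add_cancel 1 q) hk hm
  have hweight : (1 - q) ^ k * q ^ m * ((1 + √2) ^ k * √2 ^ (k + m)) = 1 := by
    calc (1 - q) ^ k * q ^ m * ((1 + √2) ^ k * √2 ^ (k + m))
        = ((1 - q) * (1 + √2) * √2) ^ k * (q * √2) ^ m := by
          rw [mul_pow, mul_pow, mul_pow, pow_add]; ring
      _ = 1 := by rw [hp1, hq1, one_pow, one_pow, one_mul]
  have hsqrt : √((k + m) / (k * m)) * √k ≤ √2 := by
    rw [← Real.sqrt_mul (by positivity)]
    refine Real.sqrt_le_sqrt ?_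
    rw [div_mul_eq_mul_div, div_le_iff₀ (by positivity)]
    nlinarith
  calc ((k + m).choose k : ℝ) * √k = (k + m).choose k * √k * 1 := (mul_one _).symm
    _ = ((k + m).choose k * (1 - q) ^ k * q ^ m) * √k * ((1 + √2) ^ k * √2 ^ (k + m)) := by
        conv_lhs => rw [← hweight]
        ring
    _ ≤ √((k + m) / (k * m)) * √k * ((1 + √2) ^ k * √2 ^ (k + m)) := by gcongr
    _ ≤ √2 * ((1 + √2) ^ k * √2 ^ (k + m)) := by gcongr
    _ = √2 * √2 ^ (k + m) * (1 + √2) ^ k := by ring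

lemma sum_range_le_div_one_sub {a : ℕ → ℝ} {r : ℝ} (hr0 : 0 ≤ r) (hr : r < 1) (ha0 : 0 ≤ a 0)
    {k : ℕ} (ha : ∀ j < k, a j ≤ r * a (j + 1)) :
    ∑ j ∈ range (k + 1), a j ≤ a k / (1 - r) := by
  induction k with
  | zero =>
    rw [sum_range_one, le_div_iff₀ (by linarith)]
    nlinarith
  | succ k ih =>
    rw [sum_range_succ, le_div_iff₀ (by linarith)]
    have h := ih fun j hj => ha j (by omega)
    rw [le_div_iff₀ (by linarith)] at h
    nlinarith [ha k (by omega)]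

lemma Nat.choose_mul_le_choose_succ_mul {d j a b : ℕ} (h : (j + 1) * a ≤ (d - j) * b) :
    d.choose j * a ≤ d.choose (j + 1) * b := by
  rcases Nat.eq_zero_or_pos (d - j) with hdj | hdj
  · rw [hdj, zero_mul, Nat.le_zero, Nat.mul_eq_zero] at h
    rcases h with h | h
    · omega
    · simp [h]
  refine Nat.le_of_mul_le_mul_right ?_ hdj
  calc d.choose j * a * (d - j) = d.choose (j + 1) * ((j + 1) * a) := by
        rw [mul_right_comm, ← Nat.choose_succ_right_eq]; ring
    _ ≤ d.choose (j + 1) * ((d - j) * b) := Nat.mul_le_mul_left _ h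
    _ = d.choose (j + 1) * b * (d - j) := by ring

lemma sum_range_choose_le_two_pow (d k : ℕ) : ∑ j ∈ range (k + 1), d.choose j ≤ 2 ^ d := by
  rw [← Nat.sum_range_choose d]
  refine sum_le_sum_of_ne_zero fun j _ hj => mem_range.mpr ?_
  by_contra hjd
  exact hj (Nat.choose_eq_zero_of_lt (by omega))

lemma exists_sqrt_two_pow_mul_sqrt_le :
    ∃ C : ℝ, ∀ d k : ℕ, 2 * d ≤ 5 * k → √2 ^ d * √k ≤ C * (1 + √2) ^ k := by
  have hs : √2 ^ 2 = 2 := Real.sq_sqrt zero_le_two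
  have hs1 : 1.25 < √2 := by
    rw [Real.lt_sqrt (by norm_num)]; norm_num
  have hpow4 : (1 + √2) ^ 4 = 17 + 12 * √2 := by
    linear_combination (4 * √2 + 8 + √2 ^ 2) * hs
  set t := (1 + √2) ^ 4 / 32
  have ht : 1 < t := by
    rw [lt_div_iff₀ (by norm_num), hpow4]; linarith
  obtain ⟨M, hM⟩ := (tendsto_pow_const_div_const_pow_of_one_lt 2 ht).bddAbove_range
  refine ⟨max 1 M, fun d k hdk => ?_⟩
  have hMk : (k : ℝ) ^ 2 ≤ M * t ^ k := by
    rw [← div_le_iff₀ (by positivity)]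
    exact hM ⟨k, rfl⟩
  have hd : (4 : ℝ) ^ d ≤ 32 ^ k := by
    calc (4 : ℝ) ^ d = 2 ^ (2 * d) := by rw [pow_mul]; norm_num
      _ ≤ 2 ^ (5 * k) := pow_le_pow_right₀ one_le_two hdk
      _ = 32 ^ k := by rw [pow_mul]; norm_num
  refine (pow_le_pow_iff_left₀ (by positivity) (by positivity) (four_ne_zero)).mp ?_
  calc (√2 ^ d * √k) ^ 4 = 4 ^ d * k ^ 2 := by
        rw [mul_pow, ← pow_mul, mul_comm d, pow_mul, show (4 : ℕ) = 2 * 2 from rfl, pow_mul,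
          pow_mul (√(k : ℝ)), hs, Real.sq_sqrt (Nat.cast_nonneg k)]
        norm_num
    _ ≤ 32 ^ k * (M * t ^ k) := by gcongr
    _ = M * ((1 + √2) ^ k) ^ 4 := by
        rw [← pow_mul, mul_comm k, pow_mul]; simp only [t]; rw [div_pow]; field_simp
    _ ≤ max 1 M ^ 4 * ((1 + √2) ^ k) ^ 4 := by
        gcongr
        calc M ≤ max 1 M := le_max_right _ _
          _ ≤ max 1 M ^ 4 := le_self_pow₀ (le_max_left _ _) four_ne_zero
    _ = (max 1 M * (1 + √2) ^ k) ^ 4 := (mul_pow _ _ _).symm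

theorem exists_sum_choose_div_le :
    ∃ C : ℝ, 0 < C ∧ ∀ d k : ℕ, k ≠ 0 →
      (∑ j ∈ range (k + 1), (d.choose j : ℝ)) / √2 ^ d
        ≤ C * (k : ℝ) ^ (-(1 : ℝ) / 2) * (1 + √2) ^ k := by
  obtain ⟨C₁, hC₁⟩ := exists_sqrt_two_pow_mul_sqrt_le
  refine ⟨max (3 * √2) C₁, by positivity, fun d k hk => ?_⟩
  have hsk : 0 < √(k : ℝ) := by positivity
  have hrpow : (k : ℝ) ^ (-(1 : ℝ) / 2) = (√k)⁻¹ := by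
    rw [neg_div, Real.rpow_neg (Nat.cast_nonneg k), Real.sqrt_eq_rpow]
  rw [hrpow, div_le_iff₀ (by positivity),
    show ∀ C : ℝ, C * (√k)⁻¹ * (1 + √2) ^ k * √2 ^ d = C * √2 ^ d * (1 + √2) ^ k / √k by
      intro C; ring,
    le_div_iff₀ hsk]
  rcases le_or_gt (2 * d) (5 * k) with hdk | hdk
  · have hsum : ∑ j ∈ range (k + 1), (d.choose j : ℝ) ≤ √2 ^ d * √2 ^ d := by
      rw [← mul_pow, Real.mul_self_sqrt zero_le_two]
      exact_mod_cast sum_range_choose_le_two_pow d k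
    calc (∑ j ∈ range (k + 1), (d.choose j : ℝ)) * √k ≤ √2 ^ d * √2 ^ d * √k := by gcongr
      _ = √2 ^ d * (√2 ^ d * √k) := mul_assoc ..
      _ ≤ √2 ^ d * (C₁ * (1 + √2) ^ k) := mul_le_mul_of_nonneg_left (hC₁ d k hdk) (by positivity)
      _ ≤ max (3 * √2) C₁ * √2 ^ d * (1 + √2) ^ k := by
        rw [mul_left_comm, ← mul_assoc]; gcongr; exact le_max_right _ _
  · have hratio : ∀ j < k, (d.choose j : ℝ) ≤ 2 / 3 * d.choose (j + 1) := by
      intro j hj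
      have hnat := Nat.choose_mul_le_choose_succ_mul (d := d) (j := j) (a := 3) (b := 2) (by omega)
      have hreal : (d.choose j : ℝ) * 3 ≤ d.choose (j + 1) * 2 := by exact_mod_cast hnat
      linarith
    have hgeom : ∑ j ∈ range (k + 1), (d.choose j : ℝ) ≤ 3 * d.choose k :=
      (sum_range_le_div_one_sub (a := fun j => (d.choose j : ℝ)) (by norm_num) (by norm_num)
        (Nat.cast_nonneg _) hratio).trans_eq (by ring)
    calc (∑ j ∈ range (k + 1), (d.choose j : ℝ)) * √k ≤ 3 * (d.choose k * √k) := by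
          rw [← mul_assoc]; gcongr
      _ ≤ 3 * (√2 * √2 ^ d * (1 + √2) ^ k) :=
        mul_le_mul_of_nonneg_left (choose_mul_sqrt_le hk (by omega)) (by norm_num)
      _ = 3 * √2 * √2 ^ d * (1 + √2) ^ k := by ring
      _ ≤ max (3 * √2) C₁ * √2 ^ d * (1 + √2) ^ k := by gcongr; exact le_max_left _ _

/-- There is an absolute constant `C > 0` such that for every degree `≤ 2` polynomial
`p : 𝔽₂ⁿ → 𝔽₂` and every `k ≥ 1`, the `k`-th Fourier weight of `(-1)^{p(x)}` is at most
`C k^{-1/2} (1 + √2)^k`. -/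
theorem fourier_weight_deg_two_sharp :
    ∃ C : ℝ, 0 < C ∧ ∀ (n : ℕ), 1 ≤ n → ∀ (p : (Fin n → ZMod 2) → ZMod 2), IsDegreeLE2 p →
      ∀ k : ℕ, 1 ≤ k →
        ∑ A ∈ Finset.powersetCard k (Finset.univ : Finset (Fin n)),
            |fCoeff (fun x => (-1 : ℝ) ^ (p x).val) A|
          ≤ C * (k : ℝ) ^ (-(1 : ℝ) / 2) * (1 + Real.sqrt 2) ^ k := by
  obtain ⟨C, hC, hbound⟩ := exists_sum_choose_div_le
  refine ⟨C, hC, fun n _ p hp k hk => ?_⟩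
  obtain ⟨B, hB⟩ := hp.exists_bilinForm
  obtain ⟨d, hd⟩ := exists_sum_abs_fCoeff_le hB k
  exact hd.trans (hbound d k (by omega))
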